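/- arXiv:2301.07268 — 5 statements merged into one kernel-verified Lean document; each statement's English description precedes it below -/
import Mathlib

section
/- In SL₃ (or any group with Chevalley generators of type A₂), the relation z_i(t₁)·z_j(t₂)·z_i(t₃) = z_j(t₃)·z_i(t₁t₃ − t₂)·z_j(t₁) holds, where z_k(t) = x_k(t)·ṡ_k. -/
/-- The one-parameter unipotent subgroup for the first simple root of `SL₃`. -/
def sl3x₁ {F : Type*} [Field F] (t : F) : Matrix (Fin 3) (Fin 3) F :=
  !![1, t, 0; 0, 1, 0; 0, 0, 1]

/-- The one-parameter unipotent subgroup for the second simple root of `SL₃`. -/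
def sl3x₂ {F : Type*} [Field F] (t : F) : Matrix (Fin 3) (Fin 3) F :=
  !![1, 0, 0; 0, 1, t; 0, 0, 1]

/-- The standard lift of the first simple reflection of `SL₃`. -/
def sl3s₁ {F : Type*} [Field F] : Matrix (Fin 3) (Fin 3) F :=
  !![0, -1, 0; 1, 0, 0; 0, 0, 1]

/-- The standard lift of the second simple reflection of `SL₃`. -/
def sl3s₂ {F : Type*} [Field F] : Matrix (Fin 3) (Fin 3) F :=
  !![1, 0, 0; 0, 0, -1; 0, 1, 0]

/-- `z_k(t) := x_k(t) · ṡ_k`. -/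
def sl3z₁ {F : Type*} [Field F] (t : F) : Matrix (Fin 3) (Fin 3) F := sl3x₁ t * sl3s₁

def sl3z₂ {F : Type*} [Field F] (t : F) : Matrix (Fin 3) (Fin 3) F := sl3x₂ t * sl3s₂

section

variable {F : Type*} [Field F]

theorem sl3z₁_eq (t : F) : sl3z₁ t = !![t, -1, 0; 1, 0, 0; 0, 0, 1] := by
  simp [sl3z₁, sl3x₁, sl3s₁]

theorem sl3z₂_eq (t : F) : sl3z₂ t = !![1, 0, 0; 0, t, -1; 0, 1, 0] := by
  simp [sl3z₂, sl3x₂, sl3s₂]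

theorem sl3z₁_mul_sl3z₂_mul_sl3z₁ (a b c : F) :
    sl3z₁ a * sl3z₂ b * sl3z₁ c = !![a * c - b, -a, 1; c, -1, 0; 1, 0, 0] := by
  simp [sl3z₁_eq, sl3z₂_eq, sub_eq_add_neg]

theorem sl3z₂_mul_sl3z₁_mul_sl3z₂ (a b c : F) :
    sl3z₂ a * sl3z₁ b * sl3z₂ c = !![b, -c, 1; a, -1, 0; 1, 0, 0] := by
  simp [sl3z₁_eq, sl3z₂_eq]

end

/-- The braid-type relation `z_i(t₁) z_j(t₂) z_i(t₃) = z_j(t₃) z_i(t₁t₃ − t₂) z_j(t₁)`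
in `SL₃`, where `z_k(t) = x_k(t)·ṡ_k`. -/
theorem sl3_z_braid_relation {F : Type*} [Field F] (t₁ t₂ t₃ : F) :
    sl3z₁ t₁ * sl3z₂ t₂ * sl3z₁ t₃ = sl3z₂ t₃ * sl3z₁ (t₁ * t₃ - t₂) * sl3z₂ t₁ := by
  rw [sl3z₁_mul_sl3z₂_mul_sl3z₁, sl3z₂_mul_sl3z₁_mul_sl3z₂]
end

section
/- Let W be a Weyl group and β = i₁…i_m a word in simple reflection indices with Demazure product equal to the longest element w∘. Then the positive distinguished subexpression (u₀,…,u_m) defined by u_m := w∘ and u_{c−1} := min(u_c, s_{i_c} u_c) is a w∘-subexpression: u₀ = id, u_m = w∘, and for each c either u_{c−1} = u_c or u_{c−1} = s_{i_c} u_c. -/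
/-!
The invariant is that `u_c` has a reduced word which is a subword of `i_c … i₁`. It holds for
`c = m` because the Demazure product of a word has a reduced word among its subwords and `w₀` is
an involution. It passes from `c` to `c - 1`: if the reduced subword starts with the letter `i_c`,
dropping it gives `s_{i_c} u_c`, which is then the shorter one; otherwise, when `s_{i_c} u_c` is
shorter, the exchange property deletes one of its letters. At `c = 0` the word is empty, so
`u₀ = 1`.

The exchange property and the uniqueness (hence self-inverseness) of the longest element come from
the permutation representation of `W` on `W × ZMod 2` in which `s_i` acts by
`(t, ε) ↦ (s_i t s_i, ε + [t = s_i])`. Its cocycle `leftInvParity x t` is the parity of the number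
of occurrences of `t` in the left inversion sequence of any word for `x`; evaluated on a reduced
word it is the indicator of the left inversions of `x`, which therefore determine `x`.
-/

namespace CoxeterSystem

variable {B W : Type*} [Group W] {M : CoxeterMatrix B} (cs : CoxeterSystem M W)

local prefix:100 "s" => cs.simple
local prefix:100 "π" => cs.wordProd
local prefix:100 "ℓ" => cs.length
local prefix:100 "lis" => cs.leftInvSeq

theorem simple_mul_mul_simple_eq_simple_iff {i : B} {t : W} : s i * t * s i = s i ↔ t = s i := by
  constructor
  · intro h
    simpa [mul_assoc] using congrArg (fun x => s i * x * s i) h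
  · rintro rfl
    simp

theorem prod_map_alternatingWord_two_mul {G : Type*} [Monoid G] (f : B → G) (i i' : B) (k : ℕ) :
    ((alternatingWord i i' (2 * k)).map f).prod = (f i * f i') ^ k := by
  induction k with
  | zero => simp [alternatingWord]
  | succ k ih =>
    rw [show 2 * (k + 1) = 2 * k + 1 + 1 by ring, alternatingWord_succ', alternatingWord_succ']
    simp [ih, pow_succ', mul_assoc]

section ParityRepresentation

variable [DecidableEq W]

noncomputable def parityPerm (i : B) : Equiv.Perm (W × ZMod 2) :=
  Function.Involutive.toPerm (fun p => (s i * p.1 * s i, p.2 + if p.1 = s i then 1 else 0))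
    (by
      rintro ⟨t, ε⟩
      simp only [simple_mul_mul_simple_eq_simple_iff, Prod.mk.injEq]
      exact ⟨by simp [mul_assoc], by rw [add_assoc, CharTwo.add_self_eq_zero, add_zero]⟩)

theorem parityPerm_apply (i : B) (t : W) (ε : ZMod 2) :
    cs.parityPerm i (t, ε) = (s i * t * s i, ε + if t = s i then 1 else 0) := rfl

theorem parityPerm_inv (i : B) : (cs.parityPerm i)⁻¹ = cs.parityPerm i :=
  Function.Involutive.toPerm_symm _

theorem count_leftInvSeq_cons (i : B) (ω : List B) (t : W) :
    (lis (i :: ω)).count t = (lis ω).count (s i * t * s i) + if t = s i then 1 else 0 := by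
  have ht : t = MulAut.conj (s i) (s i * t * s i) := by simp [mul_assoc]
  have hlis : lis (i :: ω) = s i :: (lis ω).map (MulAut.conj (s i)) := rfl
  rw [hlis, List.count_cons, ← List.count_map_of_injective (lis ω) _ (MulAut.conj (s i)).injective
    (s i * t * s i), ← ht]
  by_cases h : t = s i <;> simp [h, Ne.symm]

theorem inv_prod_map_parityPerm_apply (ω : List B) (t : W) (ε : ZMod 2) :
    (ω.map cs.parityPerm).prod⁻¹ (t, ε) = ((π ω)⁻¹ * t * π ω, ε + (lis ω).count t) := by
  induction ω generalizing t ε with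
  | nil => simp [leftInvSeq]
  | cons i ω ih =>
    rw [List.map_cons, List.prod_cons, mul_inv_rev, Equiv.Perm.mul_apply, parityPerm_inv,
      parityPerm_apply, ih, count_leftInvSeq_cons, wordProd_cons]
    simp only [mul_inv_rev, inv_simple, mul_assoc, Nat.cast_add, Prod.mk.injEq, true_and]
    split_ifs <;> simp only [Nat.cast_one, Nat.cast_zero] <;> ring

theorem even_count_leftInvSeq_alternatingWord (i i' : B) (t : W) :
    Even ((lis (alternatingWord i i' (2 * M i i'))).count t) := by
  set L := lis (alternatingWord i i' (2 * M i i')) with hL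
  have hlen : L.length = M i i' + M i i' := by simp [hL, two_mul]
  have hperiodic : ∀ k (hk : M i i' + k < L.length), L[M i i' + k] = L[k] := by
    intro k hk
    rw [hlen] at hk
    simp only [hL, getElem_leftInvSeq_alternatingWord cs i i' (M i i') (M i i' + k) (by omega),
      getElem_leftInvSeq_alternatingWord cs i i' (M i i') k (by omega),
      prod_alternatingWord_eq_mul_pow]
    rw [show (2 * (M i i' + k) + 1) / 2 = M i i' + k by omega,
      show (2 * k + 1) / 2 = k by omega, pow_add, M.symmetric i i', simple_mul_simple_pow, one_mul]
    simp
  have hdouble : L = L.take (M i i') ++ L.take (M i i') := by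
    conv_lhs => rw [← L.take_append_drop (M i i')]
    congr 1
    refine List.ext_getElem (by simp [hlen]) fun k hk _ => ?_
    rw [List.getElem_drop, List.getElem_take, hperiodic]
  rw [hdouble, List.count_append]
  exact ⟨_, rfl⟩

theorem isLiftable_parityPerm : M.IsLiftable cs.parityPerm := by
  intro i i'
  rw [← prod_map_alternatingWord_two_mul, ← inv_eq_one]
  ext ⟨t, ε⟩ : 1
  have hπ : π (alternatingWord i i' (2 * M i i')) = 1 := by
    simp [prod_alternatingWord_eq_mul_pow, simple_mul_simple_pow]
  rw [inv_prod_map_parityPerm_apply, hπ,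
    (ZMod.natCast_eq_zero_iff_even).mpr (cs.even_count_leftInvSeq_alternatingWord i i' t)]
  simp

noncomputable def parityRep : W →* Equiv.Perm (W × ZMod 2) :=
  cs.lift ⟨cs.parityPerm, cs.isLiftable_parityPerm⟩

theorem parityRep_wordProd (ω : List B) : cs.parityRep (π ω) = (ω.map cs.parityPerm).prod := by
  rw [wordProd, map_list_prod, List.map_map]
  congr 2
  ext1 i
  exact cs.lift_apply_simple _ i

noncomputable def leftInvParity (x t : W) : ZMod 2 := ((cs.parityRep x)⁻¹ (t, 0)).2

theorem parityRep_inv_apply (x t : W) (ε : ZMod 2) :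
    (cs.parityRep x)⁻¹ (t, ε) = (x⁻¹ * t * x, ε + cs.leftInvParity x t) := by
  obtain ⟨ω, rfl⟩ := cs.wordProd_surjective x
  simp [leftInvParity, parityRep_wordProd, inv_prod_map_parityPerm_apply]

theorem leftInvParity_wordProd (ω : List B) (t : W) :
    cs.leftInvParity (π ω) t = (lis ω).count t := by
  simp [leftInvParity, parityRep_wordProd, inv_prod_map_parityPerm_apply]

theorem leftInvParity_mul (x y t : W) :
    cs.leftInvParity (x * y) t = cs.leftInvParity x t + cs.leftInvParity y (x⁻¹ * t * x) := by
  have h := congrArg Prod.snd (cs.parityRep_inv_apply (x * y) t 0)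
  rw [map_mul, mul_inv_rev, Equiv.Perm.mul_apply, parityRep_inv_apply, parityRep_inv_apply] at h
  simpa using h.symm

theorem leftInvParity_one (t : W) : cs.leftInvParity 1 t = 0 := by
  simpa using cs.leftInvParity_mul 1 1 t

theorem leftInvParity_inv (x t : W) :
    cs.leftInvParity x⁻¹ t = cs.leftInvParity x (x * t * x⁻¹) := by
  have h := cs.leftInvParity_mul x⁻¹ x t
  rw [inv_mul_cancel, leftInvParity_one, inv_inv] at h
  exact CharTwo.add_eq_zero.mp h.symm

theorem leftInvParity_simple_self (i : B) : cs.leftInvParity (s i) (s i) = 1 := by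
  simpa using cs.leftInvParity_wordProd [i] (s i)

theorem isLeftInversion_of_leftInvParity_ne_zero {x t : W} (h : cs.leftInvParity x t ≠ 0) :
    cs.IsLeftInversion x t := by
  obtain ⟨ω, hω, rfl⟩ := cs.exists_isReduced x
  rw [leftInvParity_wordProd] at h
  refine cs.isLeftInversion_of_mem_leftInvSeq hω (List.count_pos_iff.mp (Nat.pos_of_ne_zero ?_))
  rintro h0
  simp [h0] at h

theorem leftInvParity_self {t : W} (ht : cs.IsReflection t) : cs.leftInvParity t t = 1 := by
  obtain ⟨w, i, rfl⟩ := ht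
  have hconj : w⁻¹ * (w * s i * w⁻¹) * w = s i := by group
  have key : cs.leftInvParity (w * (s i * w⁻¹)) (w * s i * w⁻¹) =
      cs.leftInvParity w (w * s i * w⁻¹) + (1 + cs.leftInvParity w (w * s i * w⁻¹)) := by
    rw [leftInvParity_mul, hconj, leftInvParity_mul, inv_simple, simple_mul_simple_self, one_mul,
      leftInvParity_simple_self, leftInvParity_inv]
  rw [← mul_assoc] at key
  rw [key, add_left_comm, CharTwo.add_self_eq_zero, add_zero]

theorem leftInvParity_eq_one_of_isLeftInversion {x t : W} (h : cs.IsLeftInversion x t) :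
    cs.leftInvParity x t = 1 := by
  have hcancel : t * (t * x) = x := by rw [← mul_assoc, h.1.mul_self, one_mul]
  have hzero : cs.leftInvParity (t * x) t = 0 := by
    by_contra hne
    have h' := (cs.isLeftInversion_of_leftInvParity_ne_zero hne).2
    rw [hcancel] at h'
    exact lt_asymm h.2 h'
  have key := cs.leftInvParity_mul t (t * x) t
  rw [hcancel, h.1.inv, h.1.mul_self, one_mul, cs.leftInvParity_self h.1, hzero, add_zero] at key
  exact key

theorem leftInvParity_eq_one_iff {x t : W} : cs.leftInvParity x t = 1 ↔ cs.IsLeftInversion x t :=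
  ⟨fun h => cs.isLeftInversion_of_leftInvParity_ne_zero (h ▸ one_ne_zero),
    cs.leftInvParity_eq_one_of_isLeftInversion⟩

end ParityRepresentation

theorem mem_leftInvSeq_of_isLeftInversion {ω : List B} {t : W}
    (h : cs.IsLeftInversion (π ω) t) : t ∈ lis ω := by
  classical
  have h1 := cs.leftInvParity_eq_one_of_isLeftInversion h
  rw [leftInvParity_wordProd] at h1
  refine List.count_pos_iff.mp (Nat.pos_of_ne_zero ?_)
  rintro h0
  simp [h0] at h1

theorem exists_eraseIdx_of_isLeftInversion {ω : List B} {t : W}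
    (h : cs.IsLeftInversion (π ω) t) : ∃ k < ω.length, t * π ω = π (ω.eraseIdx k) := by
  obtain ⟨k, hk, rfl⟩ := List.mem_iff_getElem.mp (cs.mem_leftInvSeq_of_isLeftInversion h)
  refine ⟨k, by simpa using hk, ?_⟩
  rw [← List.getD_eq_getElem _ 1 hk, getD_leftInvSeq_mul_wordProd]

theorem eq_of_isLeftInversion_iff {x y : W}
    (h : ∀ t, cs.IsLeftInversion x t ↔ cs.IsLeftInversion y t) : x = y := by
  classical
  have hparity : ∀ t, cs.leftInvParity x t = cs.leftInvParity y t := fun t =>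
    (by decide : ∀ a b : ZMod 2, (a = 1 ↔ b = 1) → a = b) _ _
      (cs.leftInvParity_eq_one_iff.trans ((h t).trans cs.leftInvParity_eq_one_iff.symm))
  by_contra hne
  obtain ⟨i, hi⟩ := cs.exists_leftDescent_of_ne_one (mt inv_mul_eq_one.mp hne)
  have h1 := cs.leftInvParity_eq_one_of_isLeftInversion
    ((cs.isLeftInversion_simple_iff_isLeftDescent _ i).mpr hi)
  rw [leftInvParity_mul, leftInvParity_inv, inv_inv, hparity, CharTwo.add_self_eq_zero] at h1
  exact zero_ne_one h1

theorem eq_of_forall_length_le {x y : W} (hx : ∀ w, ℓ w ≤ ℓ x) (hy : ∀ w, ℓ w ≤ ℓ y) : x = y := by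
  have key : ∀ z, (∀ w, ℓ w ≤ ℓ z) → ∀ t, cs.IsLeftInversion z t ↔ cs.IsReflection t :=
    fun z hz t => ⟨And.left, fun ht => ⟨ht, (hz _).lt_of_ne (ht.length_mul_right_ne z)⟩⟩
  exact cs.eq_of_isLeftInversion_iff fun t => (key x hx t).trans (key y hy t).symm

theorem inv_eq_self_of_forall_length_le {x : W} (h : ∀ w, ℓ w ≤ ℓ x) : x⁻¹ = x :=
  cs.eq_of_forall_length_le (fun w => (h w).trans_eq (cs.length_inv x).symm) h

def HasReducedSubword (L : List B) (x : W) : Prop :=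
  ∃ ω, ω.Sublist L ∧ cs.IsReduced ω ∧ π ω = x

noncomputable def demazureProd (L : List B) : W :=
  L.foldl (fun u i => if ℓ u < ℓ (u * s i) then u * s i else u) 1

theorem hasReducedSubword_demazureProd (L : List B) :
    cs.HasReducedSubword L (cs.demazureProd L) := by
  induction L using List.reverseRecOn with
  | nil => exact ⟨[], List.Sublist.refl _, by simp [IsReduced], rfl⟩
  | append_singleton L j ih =>
    obtain ⟨ω, hsub, hred, hω⟩ := ih
    rw [demazureProd, List.foldl_append, List.foldl_cons, List.foldl_nil, ← demazureProd, ← hω]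
    split_ifs with hasc
    · refine ⟨ω ++ [j], hsub.append (List.Sublist.refl _), ?_, by simp [wordProd_append]⟩
      have : ℓ (π ω * s j) = ℓ (π ω) + 1 := by have := cs.length_mul_simple (π ω) j; omega
      simpa [IsReduced, wordProd_append, this] using hred
    · exact ⟨ω, hsub.trans (List.sublist_append_left _ _), hred, rfl⟩

theorem HasReducedSubword.reverse {L : List B} {x : W} (h : cs.HasReducedSubword L x) :
    cs.HasReducedSubword L.reverse x⁻¹ := by
  obtain ⟨ω, hsub, hred, rfl⟩ := h
  exact ⟨ω.reverse, hsub.reverse, (cs.isReduced_reverse_iff ω).mpr hred, cs.wordProd_reverse ω⟩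

theorem HasReducedSubword.eq_one {x : W} (h : cs.HasReducedSubword [] x) : x = 1 := by
  obtain ⟨ω, hsub, -, rfl⟩ := h
  rw [List.sublist_nil.mp hsub, wordProd_nil]

theorem HasReducedSubword.of_cons {j : B} {L : List B} {x : W}
    (h : cs.HasReducedSubword (j :: L) x) :
    cs.HasReducedSubword L (if ℓ (s j * x) < ℓ x then s j * x else x) := by
  obtain ⟨ω, hsub, hred, rfl⟩ := h
  rcases List.sublist_cons_iff.mp hsub with hskip | ⟨ω, rfl, htail⟩
  · split_ifs with hdesc
    · obtain ⟨k, hk, hk'⟩ := cs.exists_eraseIdx_of_isLeftInversion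
        ((cs.isLeftInversion_simple_iff_isLeftDescent _ j).mpr hdesc)
      refine ⟨ω.eraseIdx k, (List.eraseIdx_sublist ω k).trans hskip, ?_, hk'.symm⟩
      have := cs.length_simple_mul (π ω) j
      have hred' : ℓ (π ω) = ω.length := hred
      rw [IsReduced, ← hk', List.length_eraseIdx_of_lt hk]
      omega
    · exact ⟨ω, hskip, hred, rfl⟩
  · have hred' : cs.IsReduced ω := by simpa using hred.drop 1
    have hdesc : ℓ (s j * π (j :: ω)) < ℓ (π (j :: ω)) := by
      rw [wordProd_cons, simple_mul_simple_cancel_left, ← wordProd_cons, hred, hred']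
      simp
    rw [if_pos hdesc, wordProd_cons, simple_mul_simple_cancel_left]
    exact ⟨ω, htail, hred', rfl⟩

end CoxeterSystem

/-- Let `W` be a Weyl group (a Coxeter group with a longest element `w₀`) and
`β = i₁ … i_m` a word in simple-reflection indices whose Demazure product
`s_{i₁} * ⋯ * s_{i_m}` (where `u * s := max(u, us)` in Bruhat order, computed via
lengths) equals `w₀`.  Then the positive distinguished subexpression
`(u₀, …, u_m)`, defined by `u_m := w₀` and
`u_{c-1} := min(u_c, s_{i_c} u_c)` (the shorter of the two), is a
`w₀`-subexpression: `u₀ = id`, `u_m = w₀`, and for each `c` either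
`u_{c-1} = u_c` or `u_{c-1} = s_{i_c} u_c`. -/
theorem positive_distinguished_subexpression {ι W : Type*} [Group W]
    {M : CoxeterMatrix ι} (cs : CoxeterSystem M W)
    (w₀ : W) (hmax : ∀ w : W, cs.length w ≤ cs.length w₀)
    {m : ℕ} (β : Fin m → ι)
    (hdem : List.foldl
      (fun u i => if cs.length u < cs.length (u * cs.simple i) then u * cs.simple i else u)
      1 (List.ofFn β) = w₀)
    (u : Fin (m + 1) → W)
    (hm : u (Fin.last m) = w₀)
    (hrec : ∀ c : Fin m, u c.castSucc =
      if cs.length (cs.simple (β c) * u c.succ) < cs.length (u c.succ)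
      then cs.simple (β c) * u c.succ else u c.succ) :
    u 0 = 1 ∧
    ∀ c : Fin m, u c.castSucc = u c.succ ∨ u c.castSucc = cs.simple (β c) * u c.succ := by
  refine ⟨?_, fun c => ?_⟩
  · have hprefix :
        ∀ c : Fin (m + 1), cs.HasReducedSubword ((List.ofFn β).take c).reverse (u c) := by
      intro c
      induction c using Fin.reverseInduction with
      | last =>
        have h := (cs.hasReducedSubword_demazureProd (List.ofFn β)).reverse
        rw [CoxeterSystem.demazureProd, hdem, cs.inv_eq_self_of_forall_length_le hmax, ← hm] at h
        rwa [Fin.val_last, List.take_of_length_le (by simp)]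
      | cast c ih =>
        rw [hrec c]
        apply CoxeterSystem.HasReducedSubword.of_cons
        simpa [List.take_add_one] using ih
    simpa using (hprefix 0).eq_one
  · rw [hrec c]
    split_ifs
    exacts [Or.inr rfl, Or.inl rfl]
end

section
/- If a seed Σ is really full rank after freezing at a mutable index s connected to a frozen index f with B̃_{fs} = ±1 and B̃_{fj} = 0 for all other mutable j, then Σ itself is really full rank. More precisely: let B̃ be an (n+m)×n integer matrix whose columns, after deleting column s, span ℤ^{n−1} (as the exchange matrix of the frozen seed), and suppose row f of B̃ has a single nonzero entry, equal to ±1, located in column s. Then the columns of B̃ span ℤⁿ over ℤ. -/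
/-!
Row `f` of `B` is `u • e_s` with `u` a unit, so adding a multiple of `e_f` to a vector `v`
changes `v ᵥ* B` only in its `s`-th entry, and there it can reach any value. Each row of a
left inverse of `B` with column `s` deleted is therefore corrected into a row of a left
inverse of `B`, and row `s` is obtained by correcting the zero vector.
-/

namespace Matrix

variable {ι κ R : Type*} [Fintype ι] [DecidableEq κ] [Ring R]

theorem exists_mul_eq_one_of_forall_exists_vecMul_eq_single (B : Matrix ι κ R)
    (h : ∀ j, ∃ v : ι → R, v ᵥ* B = Pi.single j 1) : ∃ A : Matrix κ ι R, A * B = 1 := by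
  choose v hv using h
  refine ⟨of v, ext fun j k => ?_⟩
  rw [mul_apply_eq_vecMul, one_eq_pi_single]
  exact congrFun (hv j) k

theorem vecMul_submatrix_val_eq_single_of_mul_eq_one {p : κ → Prop}
    {B : Matrix ι κ R} {A : Matrix (Subtype p) ι R}
    (hA : A * B.submatrix id (Subtype.val : Subtype p → κ) = 1) (j : Subtype p) (k : κ)
    (hk : p k) : (A j ᵥ* B) k = Pi.single (M := fun _ => R) (j : κ) 1 k := by
  refine (congrFun (congrFun hA j) ⟨k, hk⟩).trans ?_
  simp [one_eq_pi_single, Pi.single_apply, Subtype.ext_iff]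

theorem vecMul_add_single_eq_update [DecidableEq ι] {B : Matrix ι κ R} {f : ι} {s : κ}
    (hu : IsUnit (B f s)) (hf : ∀ k, k ≠ s → B f k = 0) (v : ι → R) (t : R) :
    (v + Pi.single f ((t - (v ᵥ* B) s) * ↑hu.unit⁻¹)) ᵥ* B = Function.update (v ᵥ* B) s t := by
  ext k
  rw [add_vecMul, single_vecMul, Pi.add_apply, Pi.smul_apply, row_apply, smul_eq_mul]
  rcases eq_or_ne k s with rfl | hk
  · rw [Function.update_self, mul_assoc, hu.val_inv_mul, mul_one, add_sub_cancel]
  · rw [Function.update_of_ne hk, hf k hk, mul_zero, add_zero]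

theorem exists_vecMul_eq_of_eqOn_ne [DecidableEq ι] {B : Matrix ι κ R} {f : ι} {s : κ}
    (hu : IsUnit (B f s)) (hf : ∀ k, k ≠ s → B f k = 0) {x : κ → R} (v : ι → R)
    (hv : ∀ k, k ≠ s → (v ᵥ* B) k = x k) : ∃ w : ι → R, w ᵥ* B = x := by
  refine ⟨_, (vecMul_add_single_eq_update hu hf v (x s)).trans ?_⟩
  ext k
  rcases eq_or_ne k s with rfl | hk
  · exact Function.update_self ..
  · rw [Function.update_of_ne hk, hv k hk]

theorem exists_mul_eq_one_of_isUnit_of_mul_submatrix_eq_one [DecidableEq ι]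
    {B : Matrix ι κ R} {f : ι} {s : κ} (hu : IsUnit (B f s)) (hf : ∀ k, k ≠ s → B f k = 0)
    (hdel : ∃ A : Matrix {k // k ≠ s} ι R,
      A * B.submatrix id (Subtype.val : {k // k ≠ s} → κ) = 1) :
    ∃ A : Matrix κ ι R, A * B = 1 := by
  obtain ⟨A, hA⟩ := hdel
  refine exists_mul_eq_one_of_forall_exists_vecMul_eq_single B fun j => ?_
  rcases eq_or_ne j s with rfl | hj
  · refine exists_vecMul_eq_of_eqOn_ne hu hf 0 fun k hk => ?_
    rw [zero_vecMul, Pi.zero_apply, Pi.single_eq_of_ne hk]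
  · exact exists_vecMul_eq_of_eqOn_ne hu hf (A ⟨j, hj⟩)
      (vecMul_submatrix_val_eq_single_of_mul_eq_one hA ⟨j, hj⟩)

end Matrix

theorem really_full_rank_of_freezing_general {n m : ℕ}
    (B : Matrix (Fin (n + m)) (Fin n) ℤ) (f : Fin (n + m)) (s : Fin n)
    (hfs : B f s = 1 ∨ B f s = -1)
    (hf : ∀ j : Fin n, j ≠ s → B f j = 0)
    (hdel : ∃ A : Matrix {j : Fin n // j ≠ s} (Fin (n + m)) ℤ,
      A * (Matrix.of fun (i : Fin (n + m)) (j : {j : Fin n // j ≠ s}) => B i (j : Fin n)) = 1) :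
    ∃ A : Matrix (Fin n) (Fin (n + m)) ℤ, A * B = 1 :=
  Matrix.exists_mul_eq_one_of_isUnit_of_mul_submatrix_eq_one (Int.isUnit_iff.mpr hfs) hf hdel

/-- Really-full-rank propagation under deletion.  Let `B` be an `(n+m) × n` integer
extended exchange matrix (rows indexed by all variables, with the first `n` rows
mutable; columns indexed by the mutable variables).  "Really full rank" means that the
columns of `B` span a rank-`n` direct summand of `ℤ^{n+m}`, i.e. `B` admits an integer
left inverse.  Suppose there is a (frozen) row `f` whose unique nonzero entry is `±1`,
located in a column `s`, and that the matrix obtained from `B` by deleting column `s`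
is really full rank (admits an integer left inverse).  Then `B` itself is really full
rank. -/
theorem really_full_rank_of_freezing {n m : ℕ}
    (B : Matrix (Fin (n + m)) (Fin n) ℤ) (f : Fin (n + m)) (s : Fin n)
    (hf_frozen : n ≤ (f : ℕ))
    (hfs : B f s = 1 ∨ B f s = -1)
    (hf : ∀ j : Fin n, j ≠ s → B f j = 0)
    (hdel : ∃ A : Matrix {j : Fin n // j ≠ s} (Fin (n + m)) ℤ,
      A * (Matrix.of fun (i : Fin (n + m)) (j : {j : Fin n // j ≠ s}) => B i (j : Fin n)) = 1) :
    ∃ A : Matrix (Fin n) (Fin (n + m)) ℤ, A * B = 1 :=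
  really_full_rank_of_freezing_general B f s hfs hf hdel
end

section
/- Under the weak σ-admissibility assumptions and quasi-admissibility of the orbit [j] (for all mutable orbits [k], B̃̇_{k'j'}·B̃̇_{k''j'} ≥ 0 for all k', k'' ∈ [k] and j' ∈ [j]), the exchange matrix of the orbit-mutated seed μ_{[j]}(Σ̃) is again σ-invariant: (μ_{[j]} B̃̇)_{σ(a)σ(b)} = (μ_{[j]} B̃̇)_{ab}, and for every mutable orbit [k], (μ_{[j]} B̃̇)_{k'k''} = 0 for all k', k'' ∈ [k]. -/
/-- Fomin–Zelevinsky matrix mutation in direction `k`. -/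
def mutateB {ι : Type*} [DecidableEq ι] (B : ι → ι → ℤ) (k : ι) : ι → ι → ℤ :=
  fun a b =>
    if a = k ∨ b = k then -B a b
    else B a b + (|B a k| * B k b + B a k * |B k b|) / 2

/-!
Since the indices of the orbit `[j]` are pairwise disconnected, mutating at them one after
another never changes the entries `B_{a j'}`, `B_{j' b}` seen by a later step, so the composite
mutation has the closed form of a single mutation with the correction terms of all `j' ∈ [j]`
added up. In this form `σ`-invariance is a reindexing of the sum along `σ`, and inside a
mutable orbit each correction term `(|x| y + x |y|) / 2` vanishes because quasi-admissibility
and skew-symmetry make `x y ≤ 0`.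
-/

theorem Equiv.Perm.SameCycle.iff_of_forall_iff {α : Type*} {σ : Equiv.Perm α} {p : α → Prop}
    (hp : ∀ a, p (σ a) ↔ p a) {x y : α} (h : σ.SameCycle x y) : p x ↔ p y := by
  obtain ⟨n, rfl⟩ := h
  induction n using Int.induction_on generalizing x with
  | zero => rfl
  | succ n ih => rw [zpow_add_one, Equiv.Perm.mul_apply, ← ih, hp]
  | pred n ih =>
    rw [zpow_sub_one, Equiv.Perm.mul_apply, ← ih, ← hp (σ⁻¹ x), Equiv.Perm.coe_inv,
      Equiv.apply_symm_apply]

theorem abs_mul_add_mul_abs_eq_zero_of_mul_nonpos {x y : ℤ} (h : x * y ≤ 0) :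
    |x| * y + x * |y| = 0 := by
  rcases mul_nonpos_iff.mp h with ⟨hx, hy⟩ | ⟨hx, hy⟩
  · rw [abs_of_nonneg hx, abs_of_nonpos hy]; ring
  · rw [abs_of_nonpos hx, abs_of_nonneg hy]; ring

section Mutation

variable {ι : Type*} [DecidableEq ι]

theorem mutateB_of_eq_or_eq (B : ι → ι → ℤ) {k a b : ι} (h : a = k ∨ b = k) :
    mutateB B k a b = -B a b := by
  simp [mutateB, h]

theorem mutateB_of_ne (B : ι → ι → ℤ) {k a b : ι} (ha : a ≠ k) (hb : b ≠ k) :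
    mutateB B k a b = B a b + (|B a k| * B k b + B a k * |B k b|) / 2 := by
  simp [mutateB, ha, hb]

theorem mutateB_eq_self_of_ne (B : ι → ι → ℤ) {k a b : ι} (ha : a ≠ k) (hb : b ≠ k)
    (h : B a k = 0 ∨ B k b = 0) : mutateB B k a b = B a b := by
  rcases h with h | h <;> simp [mutateB_of_ne B ha hb, h]

theorem foldl_mutateB_apply (B : ι → ι → ℤ) {l : List ι} (hl : l.Nodup)
    (hzero : ∀ x ∈ l, ∀ y ∈ l, B x y = 0) (a b : ι) :
    l.foldl mutateB B a b =
      if a ∈ l ∨ b ∈ l then -B a b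
      else B a b + ∑ k ∈ l.toFinset, (|B a k| * B k b + B a k * |B k b|) / 2 := by
  induction l generalizing B with
  | nil => simp
  | cons k l ih =>
    obtain ⟨hk, hl⟩ := List.nodup_cons.mp hl
    have hxk : ∀ x ∈ l, B x k = 0 := fun x hx => hzero x (by simp [hx]) k (by simp)
    have hkx : ∀ x ∈ l, B k x = 0 := fun x hx => hzero k (by simp) x (by simp [hx])
    have hne : ∀ x ∈ l, x ≠ k := fun x hx h => hk (h ▸ hx)
    have hzero' : ∀ x ∈ l, ∀ y ∈ l, mutateB B k x y = 0 := fun x hx y hy => by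
      rw [mutateB_eq_self_of_ne B (hne x hx) (hne y hy) (.inl (hxk x hx)),
        hzero x (by simp [hx]) y (by simp [hy])]
    rw [List.foldl_cons, ih (mutateB B k) hl hzero']
    by_cases hab : a ∈ l ∨ b ∈ l
    · rw [if_pos hab, if_pos (by simp; tauto)]
      by_cases hk' : a = k ∨ b = k
      · rw [mutateB_of_eq_or_eq B hk',
          hzero a (by simp; tauto) b (by simp; tauto), neg_zero, neg_zero]
      · rw [not_or] at hk'
        rw [mutateB_eq_self_of_ne B hk'.1 hk'.2 (hab.imp (hxk a) (hkx b))]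
    rw [if_neg hab]
    by_cases hk' : a = k ∨ b = k
    · rw [if_pos (by simp; tauto), mutateB_of_eq_or_eq B hk', add_eq_left]
      refine Finset.sum_eq_zero fun x hx => ?_
      rw [List.mem_toFinset] at hx
      rcases hk' with rfl | rfl
      · simp [mutateB_of_eq_or_eq B (.inl rfl : a = a ∨ x = a), hkx x hx]
      · simp [mutateB_of_eq_or_eq B (.inr rfl : x = b ∨ b = b), hxk x hx]
    · rw [not_or] at hab hk'
      have hsum : ∀ x ∈ l.toFinset,
          (|mutateB B k a x| * mutateB B k x b + mutateB B k a x * |mutateB B k x b|) / 2 =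
            (|B a x| * B x b + B a x * |B x b|) / 2 := fun x hx => by
        rw [List.mem_toFinset] at hx
        rw [mutateB_eq_self_of_ne B hk'.1 (hne x hx) (.inr (hkx x hx)),
          mutateB_eq_self_of_ne B (hne x hx) hk'.2 (.inl (hxk x hx))]
      rw [if_neg (by simp [hab.1, hab.2, hk'.1, hk'.2]), mutateB_of_ne B hk'.1 hk'.2,
        Finset.sum_congr rfl hsum, List.toFinset_cons,
        Finset.sum_insert (by simpa using hk), add_assoc]

theorem foldl_mutateB_apply_perm (B : ι → ι → ℤ) (σ : Equiv.Perm ι)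
    (hinv : ∀ a b, B (σ a) (σ b) = B a b) {l : List ι} (hl : l.Nodup)
    (hzero : ∀ x ∈ l, ∀ y ∈ l, B x y = 0) (hstable : ∀ z, σ z ∈ l ↔ z ∈ l) (a b : ι) :
    l.foldl mutateB B (σ a) (σ b) = l.foldl mutateB B a b := by
  have hsum : ∑ k ∈ l.toFinset, (|B a k| * B k b + B a k * |B k b|) / 2 =
      ∑ k ∈ l.toFinset, (|B (σ a) k| * B k (σ b) + B (σ a) k * |B k (σ b)|) / 2 :=
    Finset.sum_equiv σ (by simp [hstable]) (by simp [hinv])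
  simp only [foldl_mutateB_apply B hl hzero, hstable, hinv, hsum]

theorem foldl_mutateB_apply_eq_zero (B : ι → ι → ℤ) {l : List ι} (hl : l.Nodup)
    (hzero : ∀ x ∈ l, ∀ y ∈ l, B x y = 0) {a b : ι} (hab : B a b = 0)
    (hsign : ∀ k ∈ l, B a k * B k b ≤ 0) : l.foldl mutateB B a b = 0 := by
  rw [foldl_mutateB_apply B hl hzero, hab]
  split_ifs
  · exact neg_zero
  · refine (zero_add _).trans (Finset.sum_eq_zero fun k hk => ?_)
    rw [abs_mul_add_mul_abs_eq_zero_of_mul_nonpos (hsign k (List.mem_toFinset.mp hk)),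
      Int.zero_ediv]

end Mutation

theorem orbit_mutation_weakly_admissible_general {ι : Type*} [DecidableEq ι]
    (B : ι → ι → ℤ) (σ : Equiv.Perm ι) (isMut : ι → Prop)
    (hskew : ∀ a b, B b a = -B a b)
    (hinv : ∀ a b, B (σ a) (σ b) = B a b)
    (hmutorb : ∀ a, isMut a ↔ isMut (σ a))
    (horb : ∀ a b, isMut a → σ.SameCycle a b → B a b = 0)
    (j : ι) (hj : isMut j)
    (hqa : ∀ k' k'' j', isMut k' → σ.SameCycle k' k'' → σ.SameCycle j j' →
      0 ≤ B k' j' * B k'' j')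
    (l : List ι) (hl : l.Nodup) (hmem : ∀ z, z ∈ l ↔ σ.SameCycle j z) :
    (∀ a b, (List.foldl mutateB B l) (σ a) (σ b) = (List.foldl mutateB B l) a b) ∧
    (∀ k' k'', isMut k' → σ.SameCycle k' k'' → (List.foldl mutateB B l) k' k'' = 0) := by
  have hzero : ∀ x ∈ l, ∀ y ∈ l, B x y = 0 := fun x hx y hy =>
    have hjx := (hmem x).mp hx
    horb x y ((hjx.iff_of_forall_iff (fun a => (hmutorb a).symm)).mp hj)
      (hjx.symm.trans ((hmem y).mp hy))
  refine ⟨foldl_mutateB_apply_perm B σ hinv hl hzero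
    (fun z => by simp only [hmem, Equiv.Perm.sameCycle_apply_right]), ?_⟩
  intro k' k'' hk' hsc
  refine foldl_mutateB_apply_eq_zero B hl hzero (horb k' k'' hk' hsc) fun x hx => ?_
  rw [hskew k'' x, mul_neg, neg_nonpos]
  exact hqa k' k'' x hk' hsc ((hmem x).mp hx)

/-- Let `B` be a skew-symmetric integer exchange matrix on `J̃`, invariant under a
permutation `σ` whose orbits are entirely mutable or entirely frozen, with
`B_{a'a''} = 0` for `a', a''` in a common mutable orbit (weak `σ`-admissibility).
Let `[j]` be a mutable `σ`-orbit (enumerated by a duplicate-free list `l`), and assume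
quasi-admissibility of `μ_{[j]}`: `B_{k'j'} · B_{k''j'} ≥ 0` for all mutable `k', k''`
in a common orbit and all `j' ∈ [j]`.  Then the orbit-mutated matrix `μ_{[j]} B`
(mutation once at each index of `[j]`) is again `σ`-invariant, and it vanishes within
every mutable orbit. -/
theorem orbit_mutation_weakly_admissible {ι : Type*} [Fintype ι] [DecidableEq ι]
    (B : ι → ι → ℤ) (σ : Equiv.Perm ι) (isMut : ι → Prop)
    (hskew : ∀ a b, B b a = -B a b)
    (hinv : ∀ a b, B (σ a) (σ b) = B a b)
    (hmutorb : ∀ a, isMut a ↔ isMut (σ a))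
    (horb : ∀ a b, isMut a → σ.SameCycle a b → B a b = 0)
    (j : ι) (hj : isMut j)
    (hqa : ∀ k' k'' j', isMut k' → σ.SameCycle k' k'' → σ.SameCycle j j' →
      0 ≤ B k' j' * B k'' j')
    (l : List ι) (hl : l.Nodup) (hmem : ∀ z, z ∈ l ↔ σ.SameCycle j z) :
    (∀ a b, (List.foldl mutateB B l) (σ a) (σ b) = (List.foldl mutateB B l) a b) ∧
    (∀ k' k'', isMut k' → σ.SameCycle k' k'' → (List.foldl mutateB B l) k' k'' = 0) :=
  orbit_mutation_weakly_admissible_general B σ isMut hskew hinv hmutorb horb j hj hqa l hl hmem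
end

section
/- Unique intermediate flag: in a group with BN-pair, if F →ᵛʷ F'' with ℓ(vw) = ℓ(v) + ℓ(w), then there exists a unique flag F' with F →ᵛ F' and F' →ʷ F''. -/
open Pointwise

/-- A (Tits) BN-pair datum on a group `G` with Weyl group the Coxeter system `cs`:
a Borel subgroup `B` together with the Bruhat cells `C w = B ẇ B`, satisfying the
Bruhat decomposition `G = ⨆_w C w` (disjoint), each `C w` a single `(B, B)`-double
coset, compatibility with inversion, Tits' multiplication axiom
`C s · C w ⊆ C (s w) ∪ C w` for simple reflections `s`, and `s B s ⊄ B`. -/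
structure BNPair (G : Type*) [Group G] {ι W : Type*} [Group W] {M : CoxeterMatrix ι}
    (cs : CoxeterSystem M W) where
  B : Subgroup G
  C : W → Set G
  cell_one : C 1 = (B : Set G)
  cell_nonempty : ∀ w, (C w).Nonempty
  mem_mul_mem : ∀ (w : W) (g b₁ b₂ : G), g ∈ C w → b₁ ∈ B → b₂ ∈ B →
    b₁ * g * b₂ ∈ C w
  single_coset : ∀ (w : W) (g g' : G), g ∈ C w → g' ∈ C w →
    ∃ b₁ ∈ B, ∃ b₂ ∈ B, g' = b₁ * g * b₂
  decomp : ∀ g : G, ∃! w : W, g ∈ C w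
  inv_cell : ∀ w, (C w)⁻¹ = C w⁻¹
  simple_mul : ∀ (i : ι) (w : W),
    C (cs.simple i) * C w ⊆ C (cs.simple i * w) ∪ C w
  simple_nontrivial : ∀ i : ι, ¬ (C (cs.simple i) * C (cs.simple i) ⊆ C 1)

namespace BNPair

variable {G ι W : Type*} [Group G] [Group W] {M : CoxeterMatrix ι}
  {cs : CoxeterSystem M W}

/-- Flags `F = gB` and `F' = g'B` are in relative position `u`, written `F →ᵘ F'`,
if `g⁻¹ g' ∈ B u B`. -/
def Rel (bn : BNPair G cs) (u : W) (F F' : G ⧸ bn.B) : Prop :=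
  ∃ g g' : G, F = QuotientGroup.mk g ∧ F' = QuotientGroup.mk g' ∧ g⁻¹ * g' ∈ bn.C u

end BNPair

/-!
Tits' axiom `C s · C w ⊆ C (s w) ∪ C w`, together with induction on length, gives
`C v · C w = C (v w)` whenever `ℓ (v w) = ℓ v + ℓ w`. Hence `g⁻¹ g''` factors as `a y` with
`a ∈ C v`, `y ∈ C w`, and `F' = g a B` is an intermediate flag. For uniqueness, if
`a₁ y₁ = a₂ y₂` with `aᵢ ∈ C v`, `yᵢ ∈ C w`, split off a simple reflection `t` on the left of
`w` and induct: `a₁⁻¹ a₂` ends up in `C t · C t ⊆ B ∪ C t`, and `C t` is impossible because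
`ℓ (v t) > ℓ v`.
-/

namespace CoxeterSystem

variable {ι W : Type*} [Group W] {M : CoxeterMatrix ι} (cs : CoxeterSystem M W)

theorem length_mul_eq_add_of_length_mul_mul_eq {u v w : W}
    (h : cs.length (u * v * w) = cs.length u + cs.length v + cs.length w) :
    cs.length (u * v) = cs.length u + cs.length v ∧
      cs.length (v * w) = cs.length v + cs.length w := by
  have h₁ := cs.length_mul_le (u * v) w
  have h₂ := cs.length_mul_le u v
  have h₃ := cs.length_mul_le u (v * w)
  have h₄ := cs.length_mul_le v w
  rw [← mul_assoc] at h₃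
  omega

theorem exists_eq_simple_mul_of_ne_one {w : W} (hw : w ≠ 1) :
    ∃ i w', w = cs.simple i * w' ∧ cs.length w = cs.length w' + 1 := by
  obtain ⟨i, hi⟩ := cs.exists_leftDescent_of_ne_one hw
  exact ⟨i, cs.simple i * w, by simp [← mul_assoc], (cs.isLeftDescent_iff.mp hi).symm⟩

theorem exists_eq_mul_simple_of_ne_one {w : W} (hw : w ≠ 1) :
    ∃ i w', w = w' * cs.simple i ∧ cs.length w = cs.length w' + 1 := by
  obtain ⟨i, hi⟩ := cs.exists_rightDescent_of_ne_one hw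
  exact ⟨i, w * cs.simple i, by simp [mul_assoc], (cs.isRightDescent_iff.mp hi).symm⟩

end CoxeterSystem

namespace BNPair

variable {G ι W : Type*} [Group G] [Group W] {M : CoxeterMatrix ι} {cs : CoxeterSystem M W}
  (bn : BNPair G cs)

theorem eq_of_mem_cell {u u' : W} {g : G} (h : g ∈ bn.C u) (h' : g ∈ bn.C u') : u = u' :=
  (bn.decomp g).unique h h'

theorem mul_mem_cell_left {w : W} {b g : G} (hb : b ∈ bn.B) (hg : g ∈ bn.C w) :
    b * g ∈ bn.C w := by
  simpa using bn.mem_mul_mem w g b 1 hg hb (one_mem _)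

theorem mul_mem_cell_right {w : W} {g b : G} (hg : g ∈ bn.C w) (hb : b ∈ bn.B) :
    g * b ∈ bn.C w := by
  simpa using bn.mem_mul_mem w g 1 b hg (one_mem _) hb

theorem inv_mem_cell {w : W} {g : G} (hg : g ∈ bn.C w) : g⁻¹ ∈ bn.C w⁻¹ := by
  rw [← bn.inv_cell]
  exact Set.inv_mem_inv.mpr hg

theorem inv_cell_mul_cell (u v : W) : (bn.C u * bn.C v)⁻¹ = bn.C v⁻¹ * bn.C u⁻¹ := by
  rw [mul_inv_rev, bn.inv_cell, bn.inv_cell]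

theorem cell_mul_simple_subset (i : ι) (w : W) :
    bn.C w * bn.C (cs.simple i) ⊆ bn.C (w * cs.simple i) ∪ bn.C w := by
  have := Set.inv_subset_inv.mpr (bn.simple_mul i w⁻¹)
  rwa [bn.inv_cell_mul_cell, Set.union_inv, bn.inv_cell, bn.inv_cell, mul_inv_rev, inv_inv,
    cs.inv_simple] at this

theorem cell_subset_mul_of_inter_nonempty {u v w : W}
    (h : (bn.C u ∩ (bn.C v * bn.C w)).Nonempty) : bn.C u ⊆ bn.C v * bn.C w := by
  obtain ⟨_, hg₀, a, ha, y, hy, rfl⟩ := h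
  intro g hg
  obtain ⟨b₁, hb₁, b₂, hb₂, rfl⟩ := bn.single_coset u _ g hg₀ hg
  exact ⟨b₁ * a, bn.mul_mem_cell_left hb₁ ha, y * b₂, bn.mul_mem_cell_right hy hb₂, by group⟩

theorem cell_mul_cell_eq_of_subset {u v w : W} (h : bn.C v * bn.C w ⊆ bn.C u) :
    bn.C v * bn.C w = bn.C u := by
  obtain ⟨a, ha⟩ := bn.cell_nonempty v
  obtain ⟨y, hy⟩ := bn.cell_nonempty w
  have hay := Set.mul_mem_mul ha hy
  exact h.antisymm (bn.cell_subset_mul_of_inter_nonempty ⟨a * y, h hay, hay⟩)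

theorem cell_one_mul_cell (w : W) : bn.C 1 * bn.C w = bn.C w :=
  bn.cell_mul_cell_eq_of_subset <| Set.mul_subset_iff.mpr fun _ hb _ hg =>
    bn.mul_mem_cell_left (by rwa [bn.cell_one] at hb) hg

theorem cell_mul_cell_one (w : W) : bn.C w * bn.C 1 = bn.C w :=
  bn.cell_mul_cell_eq_of_subset <| Set.mul_subset_iff.mpr fun _ hg _ hb =>
    bn.mul_mem_cell_right hg (by rwa [bn.cell_one] at hb)

theorem simple_mul_cell_eq {i : ι} {w : W}
    (h : cs.length (cs.simple i * w) = cs.length w + 1) :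
    bn.C (cs.simple i) * bn.C w = bn.C (cs.simple i * w) := by
  induction hn : cs.length w using Nat.strong_induction_on generalizing i w with
  | _ n ih =>
    subst hn
    refine bn.cell_mul_cell_eq_of_subset fun g hg => (bn.simple_mul i w hg).resolve_right
      fun hgw => ?_
    by_cases hw : w = 1
    · subst hw
      rw [bn.cell_mul_cell_one] at hg
      simpa using congrArg cs.length (bn.eq_of_mem_cell hg hgw)
    obtain ⟨t, w', rfl, hlen⟩ := cs.exists_eq_mul_simple_of_ne_one hw
    have hsw' : cs.length (cs.simple i * w') = cs.length w' + 1 := by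
      have := cs.length_mul_eq_add_of_length_mul_mul_eq (u := cs.simple i) (v := w')
        (w := cs.simple t) (by rw [mul_assoc, h, hlen, cs.length_simple, cs.length_simple]; ring)
      rw [this.1, cs.length_simple, add_comm]
    -- the induction hypothesis for `t` and `w'⁻¹`, inverted
    have hw't : bn.C w' * bn.C (cs.simple t) = bn.C (w' * cs.simple t) := by
      have := ih (cs.length w'⁻¹) (by rw [cs.length_inv]; omega)
        (by rw [← cs.inv_simple t, ← mul_inv_rev, cs.length_inv, cs.length_inv, hlen]) rfl
      simpa [bn.inv_cell_mul_cell, bn.inv_cell] using congrArg (·⁻¹) this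
    -- `g ∈ C (s w') · C t ⊆ C (s w) ∪ C (s w')`, while `g ∈ C w` and `w ≠ s w'` by length
    rw [← hw't, ← mul_assoc, ih (cs.length w') (by omega) hsw' rfl] at hg
    rcases bn.cell_mul_simple_subset t _ hg with hg' | hg'
    · have := congrArg cs.length (bn.eq_of_mem_cell hgw hg')
      rw [← mul_assoc] at h
      omega
    · have := congrArg (cs.simple i * ·) (bn.eq_of_mem_cell hgw hg')
      simp only [← mul_assoc, cs.simple_mul_simple_self, one_mul] at this
      rw [← mul_assoc, this] at h
      omega

theorem cell_mul_cell_eq {v w : W} (h : cs.length (v * w) = cs.length v + cs.length w) :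
    bn.C v * bn.C w = bn.C (v * w) := by
  induction hn : cs.length v generalizing v with
  | zero => rw [cs.length_eq_zero_iff.mp hn, one_mul, bn.cell_one_mul_cell]
  | succ n ih =>
    have hv : v ≠ 1 := by rintro rfl; simp at hn
    obtain ⟨i, v', rfl, hlen⟩ := cs.exists_eq_simple_mul_of_ne_one hv
    have hred := cs.length_mul_eq_add_of_length_mul_mul_eq (u := cs.simple i) (v := v') (w := w)
      (by rw [h, hlen, cs.length_simple]; ring)
    have hsv'w : cs.length (cs.simple i * (v' * w)) = cs.length (v' * w) + 1 := by
      rw [← mul_assoc, h, hred.2, hlen]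
      ring
    rw [← bn.simple_mul_cell_eq (by rw [hlen, add_comm]), mul_assoc, ih hred.2 (by omega),
      bn.simple_mul_cell_eq hsv'w, mul_assoc]

theorem inv_mul_mem_of_mul_eq {v w : W} (h : cs.length (v * w) = cs.length v + cs.length w)
    {a₁ a₂ y₁ y₂ : G} (ha₁ : a₁ ∈ bn.C v) (ha₂ : a₂ ∈ bn.C v) (hy₁ : y₁ ∈ bn.C w)
    (hy₂ : y₂ ∈ bn.C w) (he : a₁ * y₁ = a₂ * y₂) : a₁⁻¹ * a₂ ∈ bn.B := by
  induction hn : cs.length w generalizing v w a₁ a₂ y₁ y₂ with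
  | zero =>
    rw [cs.length_eq_zero_iff.mp hn, bn.cell_one] at hy₁ hy₂
    have : a₁⁻¹ * a₂ = y₁ * y₂⁻¹ := by
      rw [inv_mul_eq_iff_eq_mul, ← mul_assoc, he, mul_inv_cancel_right]
    simpa [this] using mul_mem hy₁ (inv_mem hy₂)
  | succ n ih =>
    have hw : w ≠ 1 := by rintro rfl; simp at hn
    obtain ⟨t, w', rfl, hlen⟩ := cs.exists_eq_simple_mul_of_ne_one hw
    have hred := cs.length_mul_eq_add_of_length_mul_mul_eq (u := v) (v := cs.simple t) (w := w')
      (by rw [mul_assoc, h, hlen, cs.length_simple]; ring)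
    have hvt := bn.cell_mul_cell_eq hred.1
    rw [← bn.cell_mul_cell_eq (by rw [hlen, cs.length_simple, add_comm])] at hy₁ hy₂
    obtain ⟨c₁, hc₁, z₁, hz₁, rfl⟩ := hy₁
    obtain ⟨c₂, hc₂, z₂, hz₂, rfl⟩ := hy₂
    have hb := ih (v := v * cs.simple t)
      (by rw [mul_assoc, h, hred.1, hlen, cs.length_simple]; ring)
      (hvt ▸ Set.mul_mem_mul ha₁ hc₁) (hvt ▸ Set.mul_mem_mul ha₂ hc₂) hz₁ hz₂
      (by simpa only [mul_assoc] using he) (by omega)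
    have hx : a₁⁻¹ * a₂ ∈ bn.C (cs.simple t * cs.simple t) ∪ bn.C (cs.simple t) := by
      have hc₂' : c₂⁻¹ ∈ bn.C (cs.simple t) := by simpa using bn.inv_mem_cell hc₂
      have e : a₁⁻¹ * a₂ = c₁ * ((a₁ * c₁)⁻¹ * (a₂ * c₂)) * c₂⁻¹ := by group
      exact e ▸ bn.simple_mul t _ (Set.mul_mem_mul (bn.mul_mem_cell_right hc₁ hb) hc₂')
    rw [cs.simple_mul_simple_self, bn.cell_one] at hx
    refine hx.resolve_right fun hx => ?_
    have ha₂' : a₂ ∈ bn.C (v * cs.simple t) := hvt ▸ by simpa using Set.mul_mem_mul ha₁ hx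
    have := congrArg cs.length (bn.eq_of_mem_cell ha₂ ha₂')
    rw [hred.1, cs.length_simple] at this
    omega

theorem rel_mk_iff {u : W} {g h : G} :
    bn.Rel u (QuotientGroup.mk g) (QuotientGroup.mk h) ↔ g⁻¹ * h ∈ bn.C u := by
  refine ⟨fun ⟨g₀, h₀, e₁, e₂, hm⟩ => ?_, fun hm => ⟨g, h, rfl, rfl, hm⟩⟩
  have key : g⁻¹ * h = (g⁻¹ * g₀) * (g₀⁻¹ * h₀) * (h₀⁻¹ * h) := by group
  rw [key]
  exact bn.mem_mul_mem u _ _ _ hm (QuotientGroup.eq.mp e₁) (QuotientGroup.eq.mp e₂.symm)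

end BNPair

/-- Unique intermediate flag: in a group with a BN-pair, if `F →ᵛʷ F''` with
`ℓ(vw) = ℓ(v) + ℓ(w)`, then there is a unique flag `F'` with `F →ᵛ F' →ʷ F''`. -/
theorem BNPair.existsUnique_intermediate_flag {G ι W : Type*} [Group G] [Group W]
    {M : CoxeterMatrix ι} {cs : CoxeterSystem M W} (bn : BNPair G cs)
    (v w : W) (F F'' : G ⧸ bn.B)
    (h : bn.Rel (v * w) F F'')
    (hlen : cs.length (v * w) = cs.length v + cs.length w) :
    ∃! F' : G ⧸ bn.B, bn.Rel v F F' ∧ bn.Rel w F' F'' := by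
  obtain ⟨g, g'', rfl, rfl, hm⟩ := h
  rw [← bn.cell_mul_cell_eq hlen] at hm
  obtain ⟨a, ha, y, hy, hay : a * y = g⁻¹ * g''⟩ := hm
  refine ⟨QuotientGroup.mk (g * a), ⟨?_, ?_⟩, ?_⟩
  · rwa [bn.rel_mk_iff, inv_mul_cancel_left]
  · rwa [bn.rel_mk_iff, mul_inv_rev, mul_assoc, ← hay, inv_mul_cancel_left]
  · rintro F' ⟨hv, hw⟩
    obtain ⟨k, rfl⟩ := QuotientGroup.mk_surjective F'
    rw [bn.rel_mk_iff] at hv hw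
    have hB := bn.inv_mul_mem_of_mul_eq hlen hv ha hw hy (by rw [hay]; group)
    rw [mul_inv_rev, inv_inv, mul_assoc] at hB
    exact QuotientGroup.eq.mpr hB
end
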